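/- arXiv:1803.04756 — 5 statements merged into one kernel-verified Lean document; each statement's English description precedes it below -/
import Mathlib

section
/- Let G be a mean-payoff parity game whose vertex priorities are bounded by an even number d. If there exists a progress measure for G (over some linearly ordered set M), then the whole vertex set V, viewed as a subgame, has a strategy decomposition for Dis. -/
/-- A mean-payoff parity game on a vertex type `V`: a directed graph in which
every vertex has at least one outgoing edge, a partition of the vertices into
those owned by player Dis (`disOwns v`) and those owned by player Con,
a priority function and an integer cost function on edges. -/
structure MPPGame (V : Type) where
  edge : V → V → Prop
  disOwns : V → Prop
  pri : V → ℕ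
  cost : V → V → ℤ
  exists_succ : ∀ v, ∃ u, edge v u

/-- `A`, `B`, `C` partition `W`. -/
def Partition3 {V : Type} (W A B C : Set V) : Prop :=
  A ∪ B ∪ C = W ∧ Disjoint A B ∧ Disjoint A C ∧ Disjoint B C

/-- Lexicographic order on finite sequences, in which a proper prefix is
smaller than any of its proper extensions. -/
def seqLt {M : Type} (lt : M → M → Prop) : List M → List M → Prop :=
  List.Lex lt

/-- The `p`-truncation of a sequence `⟨m_{d-1}, m_{d-3}, …, m_ℓ⟩` (indexed by
odd numbers from `d-1` downwards): keep only the components `m_i` with `i ≥ p`. -/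
def trunc {M : Type} (d p : ℕ) (s : List M) : List M :=
  s.take ((d + 1 - p) / 2)

/-- The order on finite binary strings: `0s < ε`, `ε < 1s`, and
`bs < bs'` iff `s < s'`. -/
def binLt : List Bool → List Bool → Prop
  | [], [] => False
  | false :: _, [] => True
  | true :: _, [] => False
  | [], false :: _ => False
  | [], true :: _ => True
  | a :: s, b :: t => (a = false ∧ b = true) ∨ (a = b ∧ binLt s t)

/-- Membership in `S_{n,d}`: sequences `⟨m_{d-1}, …, m_ℓ⟩` of binary strings
with `ℓ` odd, `1 ≤ ℓ ≤ d+1` (equivalently `2·len ≤ d`) and total length at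
most `⌈log₂ n⌉`. -/
def inSnd (n d : ℕ) (s : List (List Bool)) : Prop :=
  2 * s.length ≤ d ∧ (s.map List.length).sum ≤ Nat.clog 2 n

namespace MPPGame

variable {V : Type}

/-- An infinite play: each consecutive pair is an edge. -/
def Play (G : MPPGame V) (p : ℕ → V) : Prop :=
  ∀ i, G.edge (p i) (p (i + 1))

/-- An infinite play that stays in the subgame induced by `W`. -/
def PlayIn (G : MPPGame V) (W : Set V) (p : ℕ → V) : Prop :=
  (∀ i, p i ∈ W) ∧ ∀ i, G.edge (p i) (p (i + 1))

/-- The mean payoff of a play: the limit superior of the averages of the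
partial sums of the edge costs. -/
noncomputable def meanPayoff (G : MPPGame V) (p : ℕ → V) : ℝ :=
  Filter.limsup
    (fun N => (∑ i ∈ Finset.range N, (G.cost (p i) (p (i + 1)) : ℝ)) / (N : ℝ))
    Filter.atTop

/-- Priority `k` occurs infinitely often along the play `p`. -/
def InfOften (G : MPPGame V) (p : ℕ → V) (k : ℕ) : Prop :=
  ∀ N, ∃ i, N ≤ i ∧ G.pri (p i) = k

/-- A play is winning for Con if the highest priority occurring infinitely
often is odd and the mean payoff is negative. -/
def ConWinsPlay (G : MPPGame V) (p : ℕ → V) : Prop :=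
  (∃ k, Odd k ∧ G.InfOften p k ∧ ∀ j, G.InfOften p j → j ≤ k) ∧
    G.meanPayoff p < 0

/-- A play is winning for Dis iff it is not winning for Con. -/
def DisWinsPlay (G : MPPGame V) (p : ℕ → V) : Prop :=
  ¬ G.ConWinsPlay p

/-- A (history-dependent) strategy for Dis: given the list of previously
visited vertices and the current vertex (owned by Dis), it picks a successor
along an edge. -/
def DisStrategy (G : MPPGame V) (σ : List V → V → V) : Prop :=
  ∀ h v, G.disOwns v → G.edge v (σ h v)

/-- A (history-dependent) strategy for Con. -/
def ConStrategy (G : MPPGame V) (σ : List V → V → V) : Prop :=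
  ∀ h v, ¬ G.disOwns v → G.edge v (σ h v)

/-- A play is consistent with a strategy `σ` of Dis. -/
def ConsistentDis (G : MPPGame V) (σ : List V → V → V) (p : ℕ → V) : Prop :=
  ∀ i, G.disOwns (p i) → p (i + 1) = σ ((List.range i).map p) (p i)

/-- A play is consistent with a strategy `σ` of Con. -/
def ConsistentCon (G : MPPGame V) (σ : List V → V → V) (p : ℕ → V) : Prop :=
  ∀ i, ¬ G.disOwns (p i) → p (i + 1) = σ ((List.range i).map p) (p i)

/-- A positional strategy for Dis. -/
def PosDisStrategy (G : MPPGame V) (σ : V → V) : Prop :=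
  ∀ v, G.disOwns v → G.edge v (σ v)

/-- A positional strategy for Con. -/
def PosConStrategy (G : MPPGame V) (σ : V → V) : Prop :=
  ∀ v, ¬ G.disOwns v → G.edge v (σ v)

/-- A play is consistent with a positional strategy `σ` of Dis. -/
def ConsistentDisPos (G : MPPGame V) (σ : V → V) (p : ℕ → V) : Prop :=
  ∀ i, G.disOwns (p i) → p (i + 1) = σ (p i)

/-- A play is consistent with a positional strategy `σ` of Con. -/
def ConsistentConPos (G : MPPGame V) (σ : V → V) (p : ℕ → V) : Prop :=
  ∀ i, ¬ G.disOwns (p i) → p (i + 1) = σ (p i)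

/-- The strategy `σ` of Dis is winning for Dis from `v`. -/
def DisWinsFrom (G : MPPGame V) (σ : List V → V → V) (v : V) : Prop :=
  ∀ p, G.Play p → p 0 = v → G.ConsistentDis σ p → G.DisWinsPlay p

/-- The strategy `σ` of Con is winning for Con from `v`. -/
def ConWinsFrom (G : MPPGame V) (σ : List V → V → V) (v : V) : Prop :=
  ∀ p, G.Play p → p 0 = v → G.ConsistentCon σ p → G.ConWinsPlay p

/-- The positional strategy `σ` of Dis is winning for Dis from `v`. -/
def DisWinsFromPos (G : MPPGame V) (σ : V → V) (v : V) : Prop :=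
  ∀ p, G.Play p → p 0 = v → G.ConsistentDisPos σ p → G.DisWinsPlay p

/-- The positional strategy `σ` of Con is winning for Con from `v`. -/
def ConWinsFromPos (G : MPPGame V) (σ : V → V) (v : V) : Prop :=
  ∀ p, G.Play p → p 0 = v → G.ConsistentConPos σ p → G.ConWinsPlay p

/-- `W` is a trap for Con: every Con vertex of `W` has all its outgoing edges
into `W`, and every Dis vertex of `W` has at least one outgoing edge into `W`. -/
def TrapForCon (G : MPPGame V) (W : Set V) : Prop :=
  ∀ v ∈ W, (¬ G.disOwns v → ∀ u, G.edge v u → u ∈ W) ∧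
    (G.disOwns v → ∃ u ∈ W, G.edge v u)

/-- `W` is a trap for Dis. -/
def TrapForDis (G : MPPGame V) (W : Set V) : Prop :=
  ∀ v ∈ W, (G.disOwns v → ∀ u, G.edge v u → u ∈ W) ∧
    (¬ G.disOwns v → ∃ u ∈ W, G.edge v u)

/-- `R` is a trap for Con inside the subgame induced by `W` (only edges
within `W` count for Con). -/
def TrapForConIn (G : MPPGame V) (W R : Set V) : Prop :=
  ∀ v ∈ R, (¬ G.disOwns v → ∀ u ∈ W, G.edge v u → u ∈ R) ∧
    (G.disOwns v → ∃ u ∈ R, G.edge v u)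

/-- `R` is a trap for Dis inside the subgame induced by `W`. -/
def TrapForDisIn (G : MPPGame V) (W R : Set V) : Prop :=
  ∀ v ∈ R, (G.disOwns v → ∀ u ∈ W, G.edge v u → u ∈ R) ∧
    (¬ G.disOwns v → ∃ u ∈ R, G.edge v u)

/-- `W` induces a subgame: it is nonempty and every vertex of `W` has an
outgoing edge within `W`. -/
def IsSubgame (G : MPPGame V) (W : Set V) : Prop :=
  W.Nonempty ∧ ∀ v ∈ W, ∃ u ∈ W, G.edge v u

/-- `τ` is a positional reachability strategy for Dis from `T` to `B` in the
subgame `W`: it is a legal positional strategy within `W`, and every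
consistent play in `W` starting in `T` reaches `B`. -/
def DisReach (G : MPPGame V) (W T B : Set V) (τ : V → V) : Prop :=
  (∀ v ∈ W, G.disOwns v → G.edge v (τ v) ∧ τ v ∈ W) ∧
    ∀ p, G.PlayIn W p → p 0 ∈ T → G.ConsistentDisPos τ p → ∃ i, p i ∈ B

/-- `τ` is a positional reachability strategy for Con from `T` to `B` in `W`. -/
def ConReach (G : MPPGame V) (W T B : Set V) (τ : V → V) : Prop :=
  (∀ v ∈ W, ¬ G.disOwns v → G.edge v (τ v) ∧ τ v ∈ W) ∧
    ∀ p, G.PlayIn W p → p 0 ∈ T → G.ConsistentConPos τ p → ∃ i, p i ∈ B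

/-- `σ` is a positional strategy for Dis that is mean-payoff winning for Dis on
`R`: every consistent play in `R` has limsup average cost `≥ 0`. -/
def DisMPWin (G : MPPGame V) (R : Set V) (σ : V → V) : Prop :=
  (∀ v ∈ R, G.disOwns v → G.edge v (σ v) ∧ σ v ∈ R) ∧
    ∀ p, G.PlayIn R p → G.ConsistentDisPos σ p → 0 ≤ G.meanPayoff p

/-- `σ` is a positional strategy for Con that is mean-payoff winning for Con on
`R`: every consistent play in `R` has limsup average cost `< 0`. -/
def ConMPWin (G : MPPGame V) (R : Set V) (σ : V → V) : Prop :=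
  (∀ v ∈ R, ¬ G.disOwns v → G.edge v (σ v) ∧ σ v ∈ R) ∧
    ∀ p, G.PlayIn R p → G.ConsistentConPos σ p → G.meanPayoff p < 0

/-- `DisDecomp G b W` : the subgame `W`, whose highest priority is `b`, has a
`b`-decomposition for Dis.  (The disjunctions in the textbook definition are
split into separate constructors, and "`X` is empty or recursively has a
decomposition" is encoded as `X.Nonempty → DisDecomp G _ X`.) -/
inductive DisDecomp (G : MPPGame V) : ℕ → Set V → Prop where
  | even (b b' : ℕ) (W R T B : Set V) (τ : V → V)
      (hb : Even b) (hsub : G.IsSubgame W)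
      (hpart : Partition3 W R T B)
      (hB : B = {v | v ∈ W ∧ G.pri v = b}) (hBne : B.Nonempty)
      (htop : ∀ v ∈ W, G.pri v ≤ b)
      (hreach : G.DisReach W T B τ)
      (hb' : R.Nonempty → b' < b)
      (hR : R.Nonempty → DisDecomp G b' R) :
      DisDecomp G b W
  | oddRec (b b' b'' : ℕ) (W U T R : Set V) (τ : V → V)
      (hb : Odd b) (hsub : G.IsSubgame W)
      (hpart : Partition3 W U T R)
      (htop : ∀ v ∈ W, G.pri v ≤ b) (htop' : ∃ v ∈ W, G.pri v = b)
      (hRne : R.Nonempty) (htrap : G.TrapForConIn W R)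
      (hb1 : b' < b) (hR : DisDecomp G b' R)
      (hreach : G.DisReach W T R τ)
      (hb2 : U.Nonempty → b'' ≤ b)
      (hU : U.Nonempty → DisDecomp G b'' U) :
      DisDecomp G b W
  | oddMP (b b'' : ℕ) (W U T R : Set V) (τ σ : V → V)
      (hb : Odd b) (hsub : G.IsSubgame W)
      (hpart : Partition3 W U T R)
      (htop : ∀ v ∈ W, G.pri v ≤ b) (htop' : ∃ v ∈ W, G.pri v = b)
      (hRne : R.Nonempty) (htrap : G.TrapForConIn W R)
      (hsig : G.DisMPWin R σ)
      (hreach : G.DisReach W T R τ)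
      (hb2 : U.Nonempty → b'' ≤ b)
      (hU : U.Nonempty → DisDecomp G b'' U) :
      DisDecomp G b W

/-- `ConDecomp G b W` : the subgame `W`, whose highest priority is `b`, has a
`b`-decomposition for Con.  ("`X` is empty or recursively has a decomposition"
is encoded as `X.Nonempty → ConDecomp G _ X`.) -/
inductive ConDecomp (G : MPPGame V) : ℕ → Set V → Prop where
  | odd (b b' : ℕ) (W R T B : Set V) (τ lam : V → V)
      (hb : Odd b) (hsub : G.IsSubgame W)
      (hpart : Partition3 W R T B)
      (hB : B = {v | v ∈ W ∧ G.pri v = b}) (hBne : B.Nonempty)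
      (htop : ∀ v ∈ W, G.pri v ≤ b)
      (hreach : G.ConReach W T B τ)
      (hb' : R.Nonempty → b' < b)
      (hR : R.Nonempty → ConDecomp G b' R)
      (hlam : G.ConMPWin W lam) :
      ConDecomp G b W
  | even (b b' b'' : ℕ) (W U T R : Set V) (τ : V → V)
      (hb : Even b) (hsub : G.IsSubgame W)
      (hpart : Partition3 W U T R)
      (htop : ∀ v ∈ W, G.pri v ≤ b) (htop' : ∃ v ∈ W, G.pri v = b)
      (hRne : R.Nonempty) (htrap : G.TrapForDisIn W R)
      (hb1 : b' < b) (hR : ConDecomp G b' R)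
      (hreach : G.ConReach W T R τ)
      (hb2 : U.Nonempty → b'' ≤ b)
      (hU : U.Nonempty → ConDecomp G b'' U) :
      ConDecomp G b W

/-- The maximum absolute value of the cost of an edge of the subgame induced
by `W` (and `0` if there is none). -/
noncomputable def maxCostOn (G : MPPGame V) (W : Set V) : ℕ :=
  sSup {n : ℕ | ∃ v ∈ W, ∃ u ∈ W, G.edge v u ∧ n = (G.cost v u).natAbs}

/-- The edge `(v, u)` is progressive in the progress labelling `(μ, φ)`
(with priorities bounded by the even number `d`, over an ordered set with
strict order `lt`). -/
def Progressive {M : Type} (G : MPPGame V) (d : ℕ) (lt : M → M → Prop)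
    (μ : V → List M) (φ : V → WithTop ℤ) (v u : V) : Prop :=
  seqLt lt (trunc d (G.pri v) (μ u)) (μ v) ∨
  (trunc d (G.pri v) (μ u) = μ v ∧ Even (G.pri v) ∧ φ v = ⊤) ∨
  (μ u = μ v ∧ φ v ≠ ⊤ ∧ φ u ≤ φ v + (G.cost v u : WithTop ℤ))

/-- `(μ, φ)` is a progress labelling on the subgame induced by `W`:
`μ v` represents the sequence `⟨m_{d-1}, m_{d-3}, …, m_ℓ⟩` (so that
`d + 1 = 2·(μ v).length + ℓ` with `ℓ` odd and `ℓ ≥ π(v)`);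
if `φ v = ∞` then `ℓ` is the least odd integer `≥ π(v)`; and if `φ v ≠ ∞`
then `0 ≤ φ v ≤ n·C`, where `n` is the number of vertices of the subgame and
`C` the maximum absolute value of an edge cost of the subgame. -/
def IsProgressLabellingOn {M : Type} (G : MPPGame V) (W : Set V) (d : ℕ)
    (μ : V → List M) (φ : V → WithTop ℤ) : Prop :=
  ∀ v ∈ W,
    (∃ l, Odd l ∧ G.pri v ≤ l ∧ d + 1 = 2 * (μ v).length + l) ∧
    (φ v = ⊤ → d + 1 ≤ 2 * (μ v).length + G.pri v + 1) ∧
    (φ v ≠ ⊤ → 0 ≤ φ v ∧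
      φ v ≤ (((W.ncard * G.maxCostOn W : ℕ) : ℤ) : WithTop ℤ))

/-- `(μ, φ)` is a progress measure on the subgame induced by `W`: a progress
labelling such that every Dis vertex has a progressive outgoing edge in the
subgame, and every outgoing edge of a Con vertex in the subgame is progressive. -/
def IsProgressMeasureOn {M : Type} (G : MPPGame V) (W : Set V) (d : ℕ)
    (lt : M → M → Prop) (μ : V → List M) (φ : V → WithTop ℤ) : Prop :=
  G.IsProgressLabellingOn W d μ φ ∧
  (∀ v ∈ W, G.disOwns v → ∃ u ∈ W, G.edge v u ∧ G.Progressive d lt μ φ v u) ∧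
  (∀ v ∈ W, ¬ G.disOwns v → ∀ u ∈ W, G.edge v u → G.Progressive d lt μ φ v u)

end MPPGame


/-! Induction on the size of the subgame `W`, according to the parity of its top priority `b`.

If `b` is even, `W` splits into the priority-`b` vertices `B`, the rest `T` of the Dis-attractor
of `B`, and the complement of that attractor, which is a trap for Dis and is decomposed
recursively.

If `b` is odd, let `t` be the least `b`-truncation of a label in `W`. Progressive edges never
increase `b`-truncations, so the vertices whose `b`-truncation is `t` form a trap `C` for Con.
If no vertex of `C` has priority `b`, then `C` is decomposed recursively. Otherwise the vertices
labelled exactly `t` with `φ ≠ ∞` form a trap `R` for Con on which only clause (iii) of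
progressiveness can hold, so `φ` is a nonnegative energy potential: following progressive edges,
Dis keeps the partial cost sums bounded below, hence the mean payoff is nonnegative. In both odd
cases the complement of the Dis-attractor of the trap is decomposed recursively. -/

open Filter Finset

theorem List.Lex.take_or_eq {M : Type*} {lt : M → M → Prop} {s t : List M} (h : List.Lex lt s t)
    (k : ℕ) : List.Lex lt (s.take k) (t.take k) ∨ s.take k = t.take k := by
  induction h generalizing k with
  | nil => cases k <;> simp
  | cons _ ih =>
    cases k with
    | zero => simp
    | succ k => exact (ih k).imp List.Lex.cons (by simp +contextual)
  | rel h => cases k <;> simp [List.Lex.rel h]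

theorem List.Lex.take_left {M : Type*} {lt : M → M → Prop} {s t : List M} (h : List.Lex lt s t)
    {k : ℕ} (hk : t.length ≤ k) : List.Lex lt (s.take k) t := by
  induction h generalizing k with
  | nil => simp
  | cons _ ih =>
    cases k with
    | zero => simp at hk
    | succ k => exact List.Lex.cons (ih (by simpa using hk))
  | rel h =>
    cases k with
    | zero => simp at hk
    | succ k => exact List.Lex.rel h

theorem exists_forall_not_lex_lt {V M : Type*} [Finite V] {lt : M → M → Prop}
    [IsStrictOrder M lt] (f : V → List M) {W : Set V} (hW : W.Nonempty) :
    ∃ v ∈ W, ∀ u ∈ W, ¬ List.Lex lt (f u) (f v) := by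
  have : IsTrans V (InvImage (List.Lex lt) f) := ⟨fun _ _ _ => List.lex_trans _root_.trans⟩
  have : Std.Irrefl (InvImage (List.Lex lt) f) := ⟨fun v => List.lex_irrefl irrefl (f v)⟩
  exact (Finite.wellFounded_of_trans_of_irrefl (InvImage (List.Lex lt) f)).has_min W hW

theorem trunc_trunc {M : Type} {d p b : ℕ} (hpb : p ≤ b) (s : List M) :
    trunc d b (trunc d p s) = trunc d b s := by
  simp only [trunc, List.take_take]
  rw [Nat.min_eq_left (Nat.div_le_div_right (by omega))]

theorem partition3_sdiff {V : Type} {W A B : Set V} (hBA : B ⊆ A) (hAW : A ⊆ W) :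
    Partition3 W (W \ A) (A \ B) B := by
  refine ⟨?_, Set.disjoint_sdiff_left.mono_right Set.sdiff_subset,
    Set.disjoint_sdiff_left.mono_right hBA, Set.disjoint_sdiff_left⟩
  rw [Set.union_assoc, Set.sdiff_union_of_subset hBA, Set.sdiff_union_of_subset hAW]

theorem Real.zero_le_limsup_average {c : ℕ → ℝ} {K B : ℝ} (hK : ∀ i, c i ≤ K)
    (hB : ∀ N, -B ≤ ∑ i ∈ range N, c i) :
    0 ≤ limsup (fun N : ℕ => (∑ i ∈ range N, c i) / N) atTop := by
  have hlim : Tendsto (fun N : ℕ => -B / N) atTop (nhds 0) :=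
    tendsto_const_div_atTop_nhds_zero_nat _
  have hbdd : IsBoundedUnder (· ≤ ·) atTop fun N : ℕ => (∑ i ∈ range N, c i) / N := by
    refine isBoundedUnder_of ⟨max K 0, fun N => div_le_of_le_mul₀ N.cast_nonneg
      (le_max_right K 0) ?_⟩
    calc ∑ i ∈ range N, c i ≤ ∑ _i ∈ range N, max K 0 :=
          sum_le_sum fun i _ => (hK i).trans (le_max_left K 0)
      _ = max K 0 * N := by simp [mul_comm]
  rw [← hlim.limsup_eq]
  exact limsup_le_limsup (Eventually.of_forall fun N => div_le_div_of_nonneg_right (hB N)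
    N.cast_nonneg) hlim.isBoundedUnder_ge.isCoboundedUnder_le hbdd

namespace MPPGame

variable {V M : Type} {G : MPPGame V}

theorem isSubgame_univ (G : MPPGame V) [Nonempty V] : G.IsSubgame Set.univ :=
  ⟨Set.univ_nonempty, fun v _ => (G.exists_succ v).imp fun _ hu => ⟨trivial, hu⟩⟩

theorem TrapForDisIn.isSubgame {W U : Set V} (htrap : G.TrapForDisIn W U) (hsub : G.IsSubgame W)
    (hUW : U ⊆ W) (hU : U.Nonempty) : G.IsSubgame U := by
  refine ⟨hU, fun v hv => ?_⟩
  by_cases hdis : G.disOwns v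
  · obtain ⟨u, hu, he⟩ := hsub.2 v (hUW hv)
    exact ⟨u, (htrap v hv).1 hdis u hu he, he⟩
  · exact (htrap v hv).2 hdis

theorem TrapForConIn.isSubgame {W R : Set V} (htrap : G.TrapForConIn W R) (hsub : G.IsSubgame W)
    (hRW : R ⊆ W) (hR : R.Nonempty) : G.IsSubgame R := by
  refine ⟨hR, fun v hv => ?_⟩
  by_cases hdis : G.disOwns v
  · exact (htrap v hv).2 hdis
  · obtain ⟨u, hu, he⟩ := hsub.2 v (hRW hv)
    exact ⟨u, (htrap v hv).1 hdis u hu he, he⟩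

theorem DisReach.mono {W T T' B : Set V} {τ : V → V} (h : G.DisReach W T B τ) (hT : T' ⊆ T) :
    G.DisReach W T' B τ :=
  ⟨h.1, fun p hp h0 hc => h.2 p hp (hT h0) hc⟩

theorem DisDecomp.exists_pri_eq {b : ℕ} {W : Set V} (h : G.DisDecomp b W) :
    ∃ v ∈ W, G.pri v = b := by
  cases h with
  | even _ _ _ _ _ _ _ _ _ _ hB hBne =>
    obtain ⟨v, hv⟩ := hBne
    rw [hB] at hv
    exact ⟨v, hv⟩
  | oddRec _ _ _ _ _ _ _ _ _ _ _ _ htop' => exact htop'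
  | oddMP _ _ _ _ _ _ _ _ _ _ _ _ htop' => exact htop'

theorem meanPayoff_nonneg_of_potential [Finite V] (p : ℕ → V) (ψ : ℕ → ℤ)
    (hψ : ∀ i, 0 ≤ ψ i) (hstep : ∀ i, ψ (i + 1) ≤ ψ i + G.cost (p i) (p (i + 1))) :
    0 ≤ G.meanPayoff p := by
  obtain ⟨K, hK⟩ := (Set.finite_range fun q : V × V => G.cost q.1 q.2).bddAbove
  have hsum : ∀ N, ψ N ≤ ψ 0 + ∑ i ∈ range N, G.cost (p i) (p (i + 1)) := by
    intro N
    induction N with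
    | zero => simp
    | succ N ih => rw [sum_range_succ]; linarith [hstep N]
  refine Real.zero_le_limsup_average (K := K) (B := ψ 0)
    (fun i => by exact_mod_cast hK ⟨(p i, p (i + 1)), rfl⟩) fun N => ?_
  have : -ψ 0 ≤ ∑ i ∈ range N, G.cost (p i) (p (i + 1)) := by linarith [hsum N, hψ N]
  exact_mod_cast this

section Attractor

variable (G) (W B : Set V)

def disCPre (X : Set V) : Set V :=
  {v ∈ W | (G.disOwns v ∧ ∃ u ∈ X, G.edge v u) ∨
    (¬ G.disOwns v ∧ ∀ u ∈ W, G.edge v u → u ∈ X)}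

def disAttrIter : ℕ → Set V
  | 0 => B
  | n + 1 => disAttrIter n ∪ G.disCPre W (disAttrIter n)

theorem disAttrIter_mono : Monotone (G.disAttrIter W B) :=
  monotone_nat_of_le_succ fun _ => Set.subset_union_left

theorem exists_disCPre_disAttrIter_subset [Finite V] :
    ∃ N, G.disCPre W (G.disAttrIter W B N) ⊆ G.disAttrIter W B N := by
  obtain ⟨N, hN⟩ := WellFoundedGT.monotone_chain_condition ⟨_, G.disAttrIter_mono W B⟩
  have hstable : G.disAttrIter W B (N + 1) = G.disAttrIter W B N := (hN (N + 1) N.le_succ).symm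
  exact ⟨N, fun v hv => hstable ▸ Or.inr hv⟩

variable {G W B}

theorem disAttrIter_subset (hBW : B ⊆ W) : ∀ n, G.disAttrIter W B n ⊆ W
  | 0 => hBW
  | n + 1 => Set.union_subset (disAttrIter_subset hBW n) (Set.sep_subset _ _)

theorem trapForDisIn_sdiff {A : Set V} (hA : G.disCPre W A ⊆ A) : G.TrapForDisIn W (W \ A) := by
  refine fun v ⟨hvW, hvA⟩ =>
    ⟨fun hdis u hu he => ⟨hu, fun huA => hvA ?_⟩, fun hcon => ?_⟩
  · exact hA ⟨hvW, Or.inl ⟨hdis, u, huA, he⟩⟩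
  · by_contra! hnone
    refine hvA (hA ⟨hvW, Or.inr ⟨hcon, fun u hu he => ?_⟩⟩)
    exact by_contra fun huA => hnone u ⟨hu, huA⟩ he

/-- Moving to the successor of least attractor rank reaches `B` from every attractor level. -/
theorem exists_disReach_disAttrIter (hsub : G.IsSubgame W) (hBW : B ⊆ W) :
    ∃ τ : V → V, ∀ n, G.DisReach W (G.disAttrIter W B n) B τ := by
  classical
  have hchoice : ∀ v, ∃ u, v ∈ W → G.edge v u ∧ u ∈ W ∧
      ∀ n, (∃ w ∈ G.disAttrIter W B n, G.edge v w) → u ∈ G.disAttrIter W B n := by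
    intro v
    by_cases hex : ∃ n, ∃ w ∈ G.disAttrIter W B n, G.edge v w
    · obtain ⟨w, hw, he⟩ := Nat.find_spec hex
      exact ⟨w, fun _ => ⟨he, disAttrIter_subset hBW _ hw, fun n hn =>
        G.disAttrIter_mono W B (Nat.find_min' hex hn) hw⟩⟩
    · by_cases hv : v ∈ W
      · obtain ⟨u, hu, he⟩ := hsub.2 v hv
        exact ⟨u, fun _ => ⟨he, hu, fun n hn => absurd ⟨n, hn⟩ hex⟩⟩
      · exact ⟨v, fun h => absurd h hv⟩
  choose τ hτ using hchoice
  refine ⟨τ, fun n => ⟨fun v hv _ => ⟨(hτ v hv).1, (hτ v hv).2.1⟩, ?_⟩⟩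
  induction n with
  | zero => exact fun p _ h0 _ => ⟨0, h0⟩
  | succ n ih =>
    rintro p hp (h0 | ⟨hW0, hstep⟩) hc
    · exact ih p hp h0 hc
    have h1 : p 1 ∈ G.disAttrIter W B n := by
      rcases hstep with ⟨hdis, hex⟩ | ⟨_, hall⟩
      · exact hc 0 hdis ▸ (hτ _ hW0).2.2 n hex
      · exact hall (p 1) (hp.1 1) (hp.2 0)
    obtain ⟨i, hi⟩ := ih (fun i => p (i + 1))
      ⟨fun i => hp.1 (i + 1), fun i => hp.2 (i + 1)⟩ h1 fun i => hc (i + 1)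
    exact ⟨i + 1, hi⟩

theorem exists_disAttractor [Finite V] (hsub : G.IsSubgame W) (hBW : B ⊆ W) :
    ∃ (A : Set V) (τ : V → V), B ⊆ A ∧ A ⊆ W ∧ G.DisReach W (A \ B) B τ ∧
      G.TrapForDisIn W (W \ A) := by
  obtain ⟨N, hN⟩ := exists_disCPre_disAttrIter_subset G W B
  obtain ⟨τ, hτ⟩ := exists_disReach_disAttrIter hsub hBW
  exact ⟨_, τ, G.disAttrIter_mono W B N.zero_le, disAttrIter_subset hBW N,
    (hτ N).mono Set.sdiff_subset, trapForDisIn_sdiff hN⟩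

end Attractor

section ProgressMeasure

variable {d : ℕ} {lt : M → M → Prop} {μ : V → List M} {φ : V → WithTop ℤ}

/-- Progress measures without the bound `φ ≤ n·C`, which depends on the subgame: this is the
form that restricts to subgames. -/
structure IsWeakProgressMeasureOn (G : MPPGame V) (W : Set V) (d : ℕ) (lt : M → M → Prop)
    (μ : V → List M) (φ : V → WithTop ℤ) : Prop where
  trunc_self : ∀ v ∈ W, trunc d (G.pri v) (μ v) = μ v
  nonneg : ∀ v ∈ W, φ v ≠ ⊤ → 0 ≤ φ v
  dis : ∀ v ∈ W, G.disOwns v → ∃ u ∈ W, G.edge v u ∧ G.Progressive d lt μ φ v u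
  con : ∀ v ∈ W, ¬ G.disOwns v → ∀ u ∈ W, G.edge v u → G.Progressive d lt μ φ v u

theorem IsProgressMeasureOn.isWeak {W : Set V} (h : G.IsProgressMeasureOn W d lt μ φ) :
    G.IsWeakProgressMeasureOn W d lt μ φ where
  trunc_self v hv := by
    obtain ⟨l, -, hl, hlen⟩ := (h.1 v hv).1
    exact List.take_of_length_le (by omega)
  nonneg v hv hφ := ((h.1 v hv).2.2 hφ).1
  dis := h.2.1
  con := h.2.2

namespace IsWeakProgressMeasureOn

variable {W R : Set V}

theorem restrict (pm : G.IsWeakProgressMeasureOn W d lt μ φ) (hRW : R ⊆ W)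
    (hclosed : ∀ v ∈ R, G.disOwns v → ∀ u ∈ W, G.edge v u →
      G.Progressive d lt μ φ v u → u ∈ R) :
    G.IsWeakProgressMeasureOn R d lt μ φ where
  trunc_self v hv := pm.trunc_self v (hRW hv)
  nonneg v hv := pm.nonneg v (hRW hv)
  dis v hv hdis := by
    obtain ⟨u, hu, he, hp⟩ := pm.dis v (hRW hv) hdis
    exact ⟨u, hclosed v hv hdis u hu he hp, he, hp⟩
  con v hv hcon u hu := pm.con v (hRW hv) hcon u (hRW hu)

theorem trapForConIn (pm : G.IsWeakProgressMeasureOn W d lt μ φ) (hRW : R ⊆ W)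
    (hclosed : ∀ v ∈ R, ∀ u ∈ W, G.Progressive d lt μ φ v u → u ∈ R) :
    G.TrapForConIn W R := by
  refine fun v hv => ⟨fun hcon u hu he => hclosed v hv u hu (pm.con v (hRW hv) hcon u hu he),
    fun hdis => ?_⟩
  obtain ⟨u, hu, he, hp⟩ := pm.dis v (hRW hv) hdis
  exact ⟨u, hclosed v hv u hu hp, he⟩

theorem exists_progressive (pm : G.IsWeakProgressMeasureOn W d lt μ φ) (hsub : G.IsSubgame W)
    {v : V} (hv : v ∈ W) : ∃ u ∈ W, G.edge v u ∧ G.Progressive d lt μ φ v u := by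
  by_cases hdis : G.disOwns v
  · exact pm.dis v hv hdis
  · obtain ⟨u, hu, he⟩ := hsub.2 v hv
    exact ⟨u, hu, he, pm.con v hv hdis u hu he⟩

end IsWeakProgressMeasureOn

namespace Progressive

variable {v u : V} {b : ℕ}

theorem trunc_lex_or_eq (h : G.Progressive d lt μ φ v u) (hb : G.pri v ≤ b) :
    List.Lex lt (trunc d b (μ u)) (trunc d b (μ v)) ∨ trunc d b (μ u) = trunc d b (μ v) := by
  rcases h with h | ⟨h, -⟩ | ⟨h, -⟩
  · rw [← trunc_trunc hb (μ u)]
    exact h.take_or_eq _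
  · rw [← trunc_trunc hb (μ u), h]
    exact Or.inr rfl
  · rw [h]
    exact Or.inr rfl

theorem cost_clause (h : G.Progressive d lt μ φ v u) (hb : G.pri v ≤ b)
    (hv : trunc d b (μ v) = μ v) (hu : ¬ List.Lex lt (trunc d b (μ u)) (μ v))
    (hφ : ¬ (Even (G.pri v) ∧ φ v = ⊤)) :
    μ u = μ v ∧ φ v ≠ ⊤ ∧ φ u ≤ φ v + (G.cost v u : WithTop ℤ) := by
  rcases h with h | ⟨-, h⟩ | h
  · refine absurd ?_ hu
    rw [← trunc_trunc hb (μ u)]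
    exact h.take_left ((List.take_eq_self_iff _).1 hv)
  · exact absurd h hφ
  · exact h

end Progressive

theorem exists_disMPWin [Finite V] {W R : Set V} (pm : G.IsWeakProgressMeasureOn W d lt μ φ)
    (hRW : R ⊆ W) (hfin : ∀ v ∈ R, φ v ≠ ⊤)
    (hclosed : ∀ v ∈ R, ∀ u ∈ W, G.Progressive d lt μ φ v u →
      u ∈ R ∧ φ u ≤ φ v + (G.cost v u : WithTop ℤ)) :
    ∃ σ, G.DisMPWin R σ := by
  have hchoice : ∀ v, ∃ u, v ∈ W → G.disOwns v →
      u ∈ W ∧ G.edge v u ∧ G.Progressive d lt μ φ v u := by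
    intro v
    by_cases h : v ∈ W ∧ G.disOwns v
    · obtain ⟨u, hu⟩ := pm.dis v h.1 h.2
      exact ⟨u, fun _ _ => hu⟩
    · exact ⟨v, fun hv hdis => absurd ⟨hv, hdis⟩ h⟩
  choose σ hσ using hchoice
  refine ⟨σ, fun v hv hdis => ?_, fun p hp hc => ?_⟩
  · obtain ⟨hσW, he, hprog⟩ := hσ v (hRW hv) hdis
    exact ⟨he, (hclosed v hv _ hσW hprog).1⟩
  have hprog : ∀ i, G.Progressive d lt μ φ (p i) (p (i + 1)) := by
    intro i
    by_cases hdis : G.disOwns (p i)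
    · exact hc i hdis ▸ (hσ _ (hRW (hp.1 i)) hdis).2.2
    · exact pm.con _ (hRW (hp.1 i)) hdis _ (hRW (hp.1 (i + 1))) (hp.2 i)
  set ψ : ℕ → ℤ := fun i => (φ (p i)).untop (hfin _ (hp.1 i))
  have hψ : ∀ i, (ψ i : WithTop ℤ) = φ (p i) := fun i => WithTop.coe_untop _ _
  refine meanPayoff_nonneg_of_potential p ψ (fun i => ?_) fun i => ?_
  · have := pm.nonneg _ (hRW (hp.1 i)) (hfin _ (hp.1 i))
    rwa [← hψ i, WithTop.coe_nonneg] at this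
  · have := (hclosed _ (hp.1 i) _ (hRW (hp.1 (i + 1))) (hprog i)).2
    rw [← hψ i, ← hψ (i + 1)] at this
    exact_mod_cast this

theorem exists_split_by_disAttractor [Finite V] {W B : Set V}
    (ih : ∀ U ⊂ W, G.IsSubgame U → G.IsWeakProgressMeasureOn U d lt μ φ →
      ∃ b, G.DisDecomp b U)
    (hsub : G.IsSubgame W) (pm : G.IsWeakProgressMeasureOn W d lt μ φ) (hBW : B ⊆ W)
    (hB : B.Nonempty) :
    ∃ (U T : Set V) (τ : V → V) (b' : ℕ), Partition3 W U T B ∧ G.DisReach W T B τ ∧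
      (U.Nonempty → G.DisDecomp b' U ∧ ∃ v ∈ W \ B, G.pri v = b') := by
  obtain ⟨A, τ, hBA, hAW, hreach, htrap⟩ := exists_disAttractor hsub hBW
  by_cases hU : (W \ A).Nonempty
  · obtain ⟨w, hw⟩ := hB
    have hUW : W \ A ⊂ W := ⟨Set.sdiff_subset, fun h => (h (hBW hw)).2 (hBA hw)⟩
    obtain ⟨b', hdec⟩ := ih _ hUW (htrap.isSubgame hsub Set.sdiff_subset hU)
      (pm.restrict Set.sdiff_subset fun v hv hdis u hu he _ => (htrap v hv).1 hdis u hu he)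
    obtain ⟨v, hv, rfl⟩ := hdec.exists_pri_eq
    exact ⟨_, _, τ, _, partition3_sdiff hBA hAW, hreach,
      fun _ => ⟨hdec, v, ⟨hv.1, fun hvB => hv.2 (hBA hvB)⟩, rfl⟩⟩
  · exact ⟨_, _, τ, 0, partition3_sdiff hBA hAW, hreach, fun h => absurd h hU⟩

theorem disDecomp_of_even_top [Finite V] {W : Set V} {b : ℕ}
    (ih : ∀ U ⊂ W, G.IsSubgame U → G.IsWeakProgressMeasureOn U d lt μ φ →
      ∃ b, G.DisDecomp b U)
    (hsub : G.IsSubgame W) (pm : G.IsWeakProgressMeasureOn W d lt μ φ) (hb : Even b)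
    (htop : ∀ v ∈ W, G.pri v ≤ b) (hbW : ∃ v ∈ W, G.pri v = b) : G.DisDecomp b W := by
  obtain ⟨R, T, τ, b', hpart, hreach, hR⟩ :=
    exists_split_by_disAttractor ih hsub pm (B := {v ∈ W | G.pri v = b}) (Set.sep_subset _ _) hbW
  refine .even b b' W R T _ τ hb hsub hpart rfl hbW htop hreach (fun hne => ?_)
    fun hne => (hR hne).1
  obtain ⟨v, ⟨hvW, hvB⟩, rfl⟩ := (hR hne).2
  exact (htop v hvW).lt_of_ne fun h => hvB ⟨hvW, h⟩

theorem exists_trapForConIn_disMPWin [Finite V] {W : Set V} {b : ℕ} {t : List M}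
    (hsub : G.IsSubgame W) (pm : G.IsWeakProgressMeasureOn W d lt μ φ) (hb : Odd b)
    (htop : ∀ v ∈ W, G.pri v ≤ b) (ht : trunc d b t = t)
    (hmin : ∀ u ∈ W, ¬ List.Lex lt (trunc d b (μ u)) t)
    {w : V} (hw : w ∈ W) (hwb : G.pri w = b) (hwt : μ w = t) :
    ∃ R ⊆ W, R.Nonempty ∧ G.TrapForConIn W R ∧ ∃ σ, G.DisMPWin R σ := by
  set R := {v ∈ W | μ v = t ∧ φ v ≠ ⊤}
  have hclosed : ∀ v ∈ R, ∀ u ∈ W, G.Progressive d lt μ φ v u →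
      u ∈ R ∧ φ u ≤ φ v + (G.cost v u : WithTop ℤ) := by
    rintro v ⟨hvW, hvt, hvφ⟩ u hu hp
    obtain ⟨hμ, -, hφ⟩ := hp.cost_clause (htop v hvW) (hvt ▸ ht) (hvt ▸ hmin u hu)
      fun h => hvφ h.2
    exact ⟨⟨hu, hμ.trans hvt,
      ne_top_of_le_ne_top (WithTop.add_ne_top.2 ⟨hvφ, WithTop.coe_ne_top⟩) hφ⟩, hφ⟩
  have hwR : w ∈ R := by
    obtain ⟨u, hu, -, hp⟩ := pm.exists_progressive hsub hw
    obtain ⟨-, hwφ, -⟩ := hp.cost_clause (htop w hw) (hwt ▸ ht) (hwt ▸ hmin u hu)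
      fun h => (Nat.not_even_iff_odd.2 hb) (hwb ▸ h.1)
    exact ⟨hw, hwt, hwφ⟩
  exact ⟨R, Set.sep_subset _ _, ⟨w, hwR⟩,
    pm.trapForConIn (Set.sep_subset _ _) fun v hv u hu hp => (hclosed v hv u hu hp).1,
    exists_disMPWin pm (Set.sep_subset _ _) (fun v hv => hv.2.2) hclosed⟩

theorem exists_trapForConIn_of_odd_top [Finite V] [IsStrictOrder M lt] {W : Set V} {b : ℕ}
    (ih : ∀ U ⊂ W, G.IsSubgame U → G.IsWeakProgressMeasureOn U d lt μ φ →
      ∃ b, G.DisDecomp b U)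
    (hsub : G.IsSubgame W) (pm : G.IsWeakProgressMeasureOn W d lt μ φ) (hb : Odd b)
    (htop : ∀ v ∈ W, G.pri v ≤ b) (hbW : ∃ v ∈ W, G.pri v = b) :
    ∃ R ⊆ W, R.Nonempty ∧ G.TrapForConIn W R ∧
      ((∃ b' < b, G.DisDecomp b' R) ∨ ∃ σ, G.DisMPWin R σ) := by
  obtain ⟨m, hm, hmin⟩ := exists_forall_not_lex_lt (lt := lt) (fun v => trunc d b (μ v)) hsub.1
  set t := trunc d b (μ m)
  set C := {v ∈ W | trunc d b (μ v) = t}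
  have hCclosed : ∀ v ∈ C, ∀ u ∈ W, G.Progressive d lt μ φ v u → u ∈ C :=
    fun v hv u hu hp =>
      ⟨hu, ((hp.trunc_lex_or_eq (htop v hv.1)).resolve_left (hv.2 ▸ hmin u hu)).trans hv.2⟩
  by_cases hCb : ∃ w ∈ C, G.pri w = b
  · obtain ⟨w, ⟨hw, hwt⟩, hwb⟩ := hCb
    obtain ⟨R, hRW, hR, htrap, hσ⟩ := exists_trapForConIn_disMPWin hsub pm hb htop
      (trunc_trunc le_rfl (μ m)) hmin hw hwb ((hwb ▸ pm.trunc_self w hw).symm.trans hwt)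
    exact ⟨R, hRW, hR, htrap, Or.inr hσ⟩
  obtain ⟨v₀, hv₀, hv₀b⟩ := hbW
  have htrap := pm.trapForConIn (Set.sep_subset _ _) hCclosed
  obtain ⟨b', hdec⟩ := ih C ⟨Set.sep_subset _ _, fun h => hCb ⟨v₀, h hv₀, hv₀b⟩⟩
    (htrap.isSubgame hsub (Set.sep_subset _ _) ⟨m, hm, rfl⟩)
    (pm.restrict (Set.sep_subset _ _) fun v hv _ u hu _ hp => hCclosed v hv u hu hp)
  obtain ⟨w, hw, rfl⟩ := hdec.exists_pri_eq
  exact ⟨C, Set.sep_subset _ _, ⟨m, hm, rfl⟩, htrap,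
    Or.inl ⟨_, (htop w hw.1).lt_of_ne fun h => hCb ⟨w, hw, h⟩, hdec⟩⟩

theorem disDecomp_of_odd_top [Finite V] [IsStrictOrder M lt] {W : Set V} {b : ℕ}
    (ih : ∀ U ⊂ W, G.IsSubgame U → G.IsWeakProgressMeasureOn U d lt μ φ →
      ∃ b, G.DisDecomp b U)
    (hsub : G.IsSubgame W) (pm : G.IsWeakProgressMeasureOn W d lt μ φ) (hb : Odd b)
    (htop : ∀ v ∈ W, G.pri v ≤ b) (hbW : ∃ v ∈ W, G.pri v = b) : G.DisDecomp b W := by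
  obtain ⟨R, hRW, hR, htrap, hcore⟩ := exists_trapForConIn_of_odd_top ih hsub pm hb htop hbW
  obtain ⟨U, T, τ, b'', hpart, hreach, hU⟩ := exists_split_by_disAttractor ih hsub pm hRW hR
  have hb'' : U.Nonempty → b'' ≤ b := fun hne => by
    obtain ⟨v, hv, rfl⟩ := (hU hne).2
    exact htop v hv.1
  rcases hcore with ⟨b', hb', hdec⟩ | ⟨σ, hσ⟩
  · exact .oddRec b b' b'' W U T R τ hb hsub hpart htop hbW hR htrap hb' hdec hreach hb''
      fun hne => (hU hne).1
  · exact .oddMP b b'' W U T R τ σ hb hsub hpart htop hbW hR htrap hσ hreach hb''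
      fun hne => (hU hne).1

theorem exists_disDecomp_of_isWeakProgressMeasureOn [Finite V] [IsStrictOrder M lt] {W : Set V}
    (hsub : G.IsSubgame W) (pm : G.IsWeakProgressMeasureOn W d lt μ φ) :
    ∃ b, G.DisDecomp b W := by
  induction W using WellFoundedLT.induction with
  | _ W ih =>
    obtain ⟨v, hv, hmax⟩ := Set.exists_max_image W G.pri W.toFinite hsub.1
    rcases Nat.even_or_odd (G.pri v) with hb | hb
    · exact ⟨_, disDecomp_of_even_top ih hsub pm hb hmax ⟨v, hv, rfl⟩⟩
    · exact ⟨_, disDecomp_of_odd_top ih hsub pm hb hmax ⟨v, hv, rfl⟩⟩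

end ProgressMeasure

end MPPGame

theorem progress_measure_to_dis_decomposition_general
    {V : Type} [Fintype V] [Nonempty V] (G : MPPGame V)
    (d : ℕ)
    (h : ∃ (M : Type) (lt : M → M → Prop), IsStrictTotalOrder M lt ∧
      ∃ (μ : V → List M) (φ : V → WithTop ℤ),
        G.IsProgressMeasureOn Set.univ d lt μ φ) :
    ∃ b, G.DisDecomp b Set.univ := by
  obtain ⟨M, lt, _, μ, φ, hpm⟩ := h
  exact MPPGame.exists_disDecomp_of_isWeakProgressMeasureOn G.isSubgame_univ hpm.isWeak

/-- If there is a progress measure (over some linearly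
ordered set `M`) for a game with priorities bounded by the even number `d`,
then the whole vertex set, viewed as a subgame, has a strategy decomposition
for Dis. -/
theorem progress_measure_to_dis_decomposition
    {V : Type} [Fintype V] [Nonempty V] (G : MPPGame V)
    (d : ℕ) (hd : Even d) (hpri : ∀ v, G.pri v ≤ d)
    (h : ∃ (M : Type) (lt : M → M → Prop), IsStrictTotalOrder M lt ∧
      ∃ (μ : V → List M) (φ : V → WithTop ℤ),
        G.IsProgressMeasureOn Set.univ d lt μ φ) :
    ∃ b, G.DisDecomp b Set.univ :=
  progress_measure_to_dis_decomposition_general G d h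
end

section
/- Let G be a mean-payoff parity game whose vertex priorities are bounded by an even number d. If there exists a progress measure for G (over some linearly ordered set M), then Dis has a positional strategy that is winning for her from every vertex of G. -/
open Filter

namespace List

variable {α : Type*} {r : α → α → Prop}

instance Lex.isStrictOrder [IsStrictOrder α r] : IsStrictOrder (List α) (Lex r) where
  irrefl := lex_irrefl irrefl
  trans _ _ _ := lex_trans (trans_of r)

theorem Lex.take_or_eq_s6 : ∀ {l₁ l₂ : List α}, Lex r l₁ l₂ → ∀ n,
    Lex r (l₁.take n) (l₂.take n) ∨ l₁.take n = l₂.take n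
  | _, _, _, 0 => Or.inr rfl
  | _, _, .nil, _ + 1 => Or.inl .nil
  | _, _, .cons h, n + 1 => (h.take_or_eq_s6 n).imp .cons fun h => by simp only [take_succ_cons, h]
  | _, _, .rel h, _ + 1 => Or.inl (.rel h)

theorem not_lex_append_left [Std.Irrefl r] : ∀ l₁ l₂ : List α, ¬ Lex r (l₁ ++ l₂) l₁
  | [], _, h => not_lex_nil h
  | _ :: l₁, l₂, h => not_lex_append_left l₁ l₂ (lex_cons_iff.1 h)

theorem IsPrefix.not_lex [Std.Irrefl r] {l₁ l₂ : List α} (h : l₁ <+: l₂) : ¬ Lex r l₂ l₁ := by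
  obtain ⟨t, rfl⟩ := h
  exact not_lex_append_left l₁ t

end List

theorem exists_eventually_eq_of_finite_range {α : Type*} {r : α → α → Prop} [IsStrictOrder α r]
    {t : ℕ → α} (hfin : (Set.range t).Finite)
    (hstep : ∀ᶠ i in atTop, t (i + 1) = t i ∨ r (t (i + 1)) (t i)) :
    ∃ a, ∀ᶠ i in atTop, t i = a := by
  obtain ⟨N, hN⟩ := eventually_atTop.1 hstep
  set S := t '' Set.Ici N
  have hS : S.Finite := hfin.subset (Set.image_subset_range t _)
  obtain ⟨_, ⟨i₀, hi₀, rfl⟩, hmin⟩ :=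
    (Set.wellFoundedOn_iff.1 (hS.wellFoundedOn (r := r))).has_min S
      ⟨t N, N, Set.mem_Ici.2 le_rfl, rfl⟩
  have hchain : ∀ i ≥ i₀, t i = t i₀ ∨ r (t i) (t i₀) := by
    intro i hi
    induction i, hi using Nat.le_induction with
    | base => exact Or.inl rfl
    | succ i hi ih =>
      rcases hN i (hi₀.trans hi) with h | h <;> rcases ih with h' | h'
      · exact Or.inl (h.trans h')
      · exact Or.inr (h ▸ h')
      · exact Or.inr (h' ▸ h)
      · exact Or.inr (trans_of r h h')
  refine ⟨t i₀, eventually_atTop.2 ⟨i₀, fun i hi => (hchain i hi).resolve_right fun h => ?_⟩⟩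
  exact hmin _ ⟨i, hi₀.trans hi, rfl⟩ ⟨h, ⟨i, hi₀.trans hi, rfl⟩, ⟨i₀, hi₀, rfl⟩⟩

theorem add_sum_range_le_of_le_add {α : Type*} [AddCommMonoid α] [PartialOrder α]
    [IsOrderedAddMonoid α] {z c : ℕ → α} {j : ℕ} (h : ∀ i ≥ j, z (i + 1) ≤ z i + c i) :
    ∀ n ≥ j, z n + ∑ i ∈ Finset.range j, c i ≤ z j + ∑ i ∈ Finset.range n, c i := by
  intro n hn
  induction n, hn using Nat.le_induction with
  | base => rfl
  | succ n hn ih =>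
    calc z (n + 1) + ∑ i ∈ Finset.range j, c i
        ≤ z n + c n + ∑ i ∈ Finset.range j, c i := by gcongr; exact h n hn
      _ = z n + ∑ i ∈ Finset.range j, c i + c n := by abel
      _ ≤ z j + ∑ i ∈ Finset.range n, c i + c n := by gcongr
      _ = z j + ∑ i ∈ Finset.range (n + 1), c i := by rw [Finset.sum_range_succ, add_assoc]

theorem limsup_avg_nonneg_of_sum_ge {x : ℕ → ℝ} {B C : ℝ} (hC : ∀ i, x i ≤ C)
    (hB : ∀ᶠ n in atTop, B ≤ ∑ i ∈ Finset.range n, x i) :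
    0 ≤ limsup (fun n : ℕ => (∑ i ∈ Finset.range n, x i) / n) atTop := by
  have hlim : Tendsto (fun n : ℕ => B / n) atTop (nhds 0) := tendsto_const_div_atTop_nhds_zero_nat B
  rw [← hlim.limsup_eq]
  refine limsup_le_limsup ?_ hlim.isBoundedUnder_ge.isCoboundedUnder_le
    (isBoundedUnder_of_eventually_le (a := C) ?_)
  · filter_upwards [hB] with n hn
    exact div_le_div_of_nonneg_right hn n.cast_nonneg
  · filter_upwards [eventually_gt_atTop 0] with n hn
    rw [div_le_iff₀ (by positivity)]
    calc ∑ i ∈ Finset.range n, x i ≤ ∑ _i ∈ Finset.range n, C := Finset.sum_le_sum fun i _ => hC i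
      _ = C * n := by rw [Finset.sum_const, Finset.card_range, nsmul_eq_mul, mul_comm]

section Truncation

variable {M : Type} {lt : M → M → Prop} {d : ℕ}

theorem trunc_trunc_of_le {p k : ℕ} (h : p ≤ k) (s : List M) :
    trunc d k (trunc d p s) = trunc d k s := by
  unfold trunc
  rw [List.take_take, min_eq_left (by omega)]

theorem seqLt.trunc_or_eq {s s' : List M} (h : seqLt lt s s') (d k : ℕ) :
    seqLt lt (trunc d k s) (trunc d k s') ∨ trunc d k s = trunc d k s' :=
  List.Lex.take_or_eq_s6 h _

theorem not_seqLt_trunc_self [Std.Irrefl lt] (k : ℕ) (s : List M) : ¬ seqLt lt s (trunc d k s) :=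
  (List.take_prefix _ s).not_lex

end Truncation

namespace MPPGame

variable {V M : Type} {G : MPPGame V} {d : ℕ} {lt : M → M → Prop} {μ : V → List M}
  {φ : V → WithTop ℤ}

/-- Clause (iii) of `Progressive`. -/
def EnergyStep (G : MPPGame V) (μ : V → List M) (φ : V → WithTop ℤ) (v u : V) : Prop :=
  μ u = μ v ∧ φ v ≠ ⊤ ∧ φ u ≤ φ v + (G.cost v u : WithTop ℤ)

theorem IsProgressLabellingOn.trunc_pri_self {W : Set V} (h : G.IsProgressLabellingOn W d μ φ)
    {v : V} (hv : v ∈ W) : trunc d (G.pri v) (μ v) = μ v := by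
  obtain ⟨⟨l, -, hl, hd⟩, -⟩ := h v hv
  exact List.take_of_length_le (by omega)

theorem IsProgressLabellingOn.nonneg {W : Set V} (h : G.IsProgressLabellingOn W d μ φ) {v : V}
    (hv : v ∈ W) (hφ : φ v ≠ ⊤) : 0 ≤ φ v :=
  ((h v hv).2.2 hφ).1

theorem Progressive.trunc_or_eq {v u : V} {k : ℕ} (h : G.Progressive d lt μ φ v u)
    (hk : G.pri v ≤ k) :
    seqLt lt (trunc d k (μ u)) (trunc d k (μ v)) ∨ trunc d k (μ u) = trunc d k (μ v) := by
  rcases h with h | ⟨h, -⟩ | ⟨h, -⟩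
  · simpa only [trunc_trunc_of_le hk] using h.trunc_or_eq d k
  · exact Or.inr (by rw [← h, trunc_trunc_of_le hk])
  · exact Or.inr (by rw [h])

theorem Progressive.energyStep [Std.Irrefl lt] {v u : V} {k : ℕ}
    (h : G.Progressive d lt μ φ v u) (hk : G.pri v ≤ k) (hu : trunc d k (μ u) = μ v)
    (hv : ¬ (Even (G.pri v) ∧ φ v = ⊤)) : G.EnergyStep μ φ v u := by
  rcases h with h | ⟨-, h⟩ | h
  · rw [← hu, ← trunc_trunc_of_le hk (μ u)] at h
    exact absurd h (not_seqLt_trunc_self k _)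
  · exact absurd h hv
  · exact h

variable {p : ℕ → V}

theorem infOften_iff_frequently {k : ℕ} : G.InfOften p k ↔ ∃ᶠ i in atTop, G.pri (p i) = k :=
  frequently_atTop.symm

theorem eventually_pri_le [Finite V] {k : ℕ} (hk : ∀ j, G.InfOften p j → j ≤ k) :
    ∀ᶠ i in atTop, G.pri (p i) ≤ k := by
  have hrare : ∀ v : V, ∀ᶠ i in atTop, k < G.pri v → G.pri (p i) ≠ G.pri v := by
    intro v
    by_cases hv : k < G.pri v
    · have : ∀ᶠ i in atTop, G.pri (p i) ≠ G.pri v :=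
        not_frequently.1 fun h => hv.not_ge (hk _ (infOften_iff_frequently.2 h))
      exact this.mono fun _ h _ => h
    · exact Eventually.of_forall fun _ h => absurd h hv
  filter_upwards [eventually_all.2 hrare] with i hi
  exact not_lt.1 fun h => hi (p i) h rfl

theorem exists_eventually_trunc_eq [Finite V] [IsStrictOrder M lt] {k : ℕ}
    (h : ∀ᶠ i in atTop, G.Progressive d lt μ φ (p i) (p (i + 1)) ∧ G.pri (p i) ≤ k) :
    ∃ s, ∀ᶠ i in atTop, trunc d k (μ (p i)) = s :=
  exists_eventually_eq_of_finite_range (r := List.Lex lt)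
    ((Set.finite_range _).subset (Set.range_comp_subset_range p fun v => trunc d k (μ v)))
    (h.mono fun _ ⟨hprog, hk⟩ => (hprog.trunc_or_eq hk).symm)

theorem eventually_energyStep [Finite V] [IsStrictOrder M lt] {k : ℕ}
    (hμ : ∀ v, trunc d (G.pri v) (μ v) = μ v)
    (hprog : ∀ i, G.Progressive d lt μ φ (p i) (p (i + 1)))
    (hk : Odd k) (hkinf : G.InfOften p k) (hkmax : ∀ j, G.InfOften p j → j ≤ k) :
    ∀ᶠ i in atTop, G.EnergyStep μ φ (p i) (p (i + 1)) := by
  have hle := eventually_pri_le hkmax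
  obtain ⟨s, hs⟩ := exists_eventually_trunc_eq (hle.mono fun i h => ⟨hprog i, h⟩)
  obtain ⟨N, hN⟩ := eventually_atTop.1 (hle.and hs)
  obtain ⟨j, hj, hjk⟩ := hkinf N
  have hstep : ∀ i ≥ N, μ (p i) = s → ¬ (Even (G.pri (p i)) ∧ φ (p i) = ⊤) →
      G.EnergyStep μ φ (p i) (p (i + 1)) := fun i hi hμs hv =>
    (hprog i).energyStep (hN i hi).1 ((hN (i + 1) (by omega)).2.trans hμs.symm) hv
  have hinv : ∀ i ≥ j, μ (p i) = s ∧ ¬ (Even (G.pri (p i)) ∧ φ (p i) = ⊤) := by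
    intro i hi
    induction i, hi using Nat.le_induction with
    | base =>
      refine ⟨?_, fun h => Nat.not_even_iff_odd.2 hk (hjk ▸ h.1)⟩
      rw [← hμ, hjk]
      exact (hN j hj).2
    | succ i hi ih =>
      obtain ⟨hμ', hφ, hφ'⟩ := hstep i (hj.trans hi) ih.1 ih.2
      refine ⟨hμ'.trans ih.1, fun h => ?_⟩
      exact ne_top_of_le_ne_top (WithTop.add_ne_top.2 ⟨hφ, WithTop.coe_ne_top⟩) hφ' h.2
  exact eventually_atTop.2 ⟨j, fun i hi => hstep i (hj.trans hi) (hinv i hi).1 (hinv i hi).2⟩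

theorem meanPayoff_nonneg [Finite V] (hφ : ∀ v, φ v ≠ ⊤ → 0 ≤ φ v)
    (h : ∀ᶠ i in atTop, G.EnergyStep μ φ (p i) (p (i + 1))) : 0 ≤ G.meanPayoff p := by
  obtain ⟨C, hC⟩ := (Set.finite_range fun e : V × V => G.cost e.1 e.2).bddAbove
  obtain ⟨j, hj⟩ := eventually_atTop.1 h
  set c : ℕ → ℤ := fun i => G.cost (p i) (p (i + 1))
  set z : ℕ → ℤ := fun i => (φ (p i)).untopD 0
  have hz : ∀ i ≥ j, φ (p i) = z i := fun i hi => by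
    obtain ⟨a, ha⟩ := WithTop.ne_top_iff_exists.1 (hj i hi).2.1
    simp only [z, ← ha, WithTop.untopD_coe]
  have hz_step : ∀ i ≥ j, z (i + 1) ≤ z i + c i := fun i hi => by
    have := (hj i hi).2.2
    rwa [hz i hi, hz (i + 1) (by omega), ← WithTop.coe_add, WithTop.coe_le_coe] at this
  have hz_nonneg : ∀ i ≥ j, 0 ≤ z i := fun i hi => by
    simpa only [hz i hi, WithTop.coe_nonneg] using hφ _ (hj i hi).2.1
  refine limsup_avg_nonneg_of_sum_ge (B := ((∑ i ∈ Finset.range j, c i - z j : ℤ) : ℝ))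
    (fun i => (Int.cast_le (R := ℝ)).2 (hC ⟨(p i, p (i + 1)), rfl⟩))
    (eventually_atTop.2 ⟨j, fun n hn => ?_⟩)
  have hsum : ∑ i ∈ Finset.range j, c i - z j ≤ ∑ i ∈ Finset.range n, c i := by
    linarith [add_sum_range_le_of_le_add hz_step n hn, hz_nonneg n hn]
  exact_mod_cast hsum

theorem IsProgressMeasureOn.exists_posDisStrategy
    (h : G.IsProgressMeasureOn Set.univ d lt μ φ) :
    ∃ σ : V → V, G.PosDisStrategy σ ∧ ∀ v, G.disOwns v → G.Progressive d lt μ φ v (σ v) := by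
  have hex : ∀ v, ∃ u, G.disOwns v → G.edge v u ∧ G.Progressive d lt μ φ v u := by
    intro v
    by_cases hv : G.disOwns v
    · obtain ⟨u, -, hu⟩ := h.2.1 v trivial hv
      exact ⟨u, fun _ => hu⟩
    · exact ⟨v, fun h => absurd h hv⟩
  choose σ hσ using hex
  exact ⟨σ, fun v hv => (hσ v hv).1, fun v hv => (hσ v hv).2⟩

theorem IsProgressMeasureOn.progressive_of_consistent {σ : V → V}
    (h : G.IsProgressMeasureOn Set.univ d lt μ φ)
    (hσ : ∀ v, G.disOwns v → G.Progressive d lt μ φ v (σ v))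
    (hp : G.Play p) (hσp : G.ConsistentDisPos σ p) (i : ℕ) :
    G.Progressive d lt μ φ (p i) (p (i + 1)) := by
  by_cases hi : G.disOwns (p i)
  · rw [hσp i hi]
    exact hσ _ hi
  · exact h.2.2 _ trivial hi _ trivial (hp i)

end MPPGame

theorem progress_measure_to_dis_winning_general
    {V : Type} [Fintype V] (G : MPPGame V)
    (d : ℕ)
    (h : ∃ (M : Type) (lt : M → M → Prop), IsStrictTotalOrder M lt ∧
      ∃ (μ : V → List M) (φ : V → WithTop ℤ),
        G.IsProgressMeasureOn Set.univ d lt μ φ) :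
    ∃ σ : V → V, G.PosDisStrategy σ ∧ ∀ v, G.DisWinsFromPos σ v := by
  obtain ⟨M, lt, hlt, μ, φ, hpm⟩ := h
  obtain ⟨σ, hσ, hσprog⟩ := hpm.exists_posDisStrategy
  refine ⟨σ, hσ, fun v p hp _ hσp ⟨⟨k, hk, hkinf, hkmax⟩, hneg⟩ => hneg.not_ge ?_⟩
  have hprog := hpm.progressive_of_consistent hσprog hp hσp
  have henergy := G.eventually_energyStep (fun v => hpm.1.trunc_pri_self (Set.mem_univ v))
    hprog hk hkinf hkmax
  exact G.meanPayoff_nonneg (fun v => hpm.1.nonneg (Set.mem_univ v)) henergy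

/-- If there is a progress measure (over some linearly
ordered set `M`) for a game with priorities bounded by the even number `d`,
then Dis has a positional strategy winning for her from every vertex. -/
theorem progress_measure_to_dis_winning
    {V : Type} [Fintype V] (G : MPPGame V)
    (d : ℕ) (hd : Even d) (hpri : ∀ v, G.pri v ≤ d)
    (h : ∃ (M : Type) (lt : M → M → Prop), IsStrictTotalOrder M lt ∧
      ∃ (μ : V → List M) (φ : V → WithTop ℤ),
        G.IsProgressMeasureOn Set.univ d lt μ φ) :
    ∃ σ : V → V, G.PosDisStrategy σ ∧ ∀ v, G.DisWinsFromPos σ v :=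
  progress_measure_to_dis_winning_general G d h
end

section
/- Let G be a mean-payoff parity game with n vertices whose vertex priorities are bounded by an even number d. For every progress labelling (µ, φ) of G (over any linearly ordered set M) there exists a succinct progress labelling (µ', φ) that is isomorphic to it; that is, µ' takes values in S_{n,d}, for every vertex v the sequences µ(v) and µ'(v) have the same index ℓ, and for all vertices v, w and every priority p: µ'(v)|_p < µ'(w)|_p if and only if µ(v)|_p < µ(w)|_p, and µ'(v)|_p = µ'(w)|_p if and only if µ(v)|_p = µ(w)|_p. In particular, if (µ, φ) is a progress measure then so is (µ', φ). -/
/-!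
Group the sequences by their first component and weight each distinct first component by the
number of sequences starting with it. Splitting the components at the weighted median, giving
the median the empty string and prefixing the codes of the two lighter halves by `0` and `1`,
yields an order-preserving binary code in which a component of weight `w` out of `n` has
length at most `⌈log₂ n⌉ - ⌈log₂ w⌉`. Recursing on the tails, these bounds telescope along
every sequence to `⌈log₂ n⌉`. The `k`-th component of the encoding depends only on the first
`k` components of the sequence, so the encoding commutes with truncation and thus preserves
and reflects the order and equality of all truncations; as it preserves lengths, indices `ℓ`
and progressive edges carry over.
-/

instance : Std.Asymm binLt where
  asymm := by
    intro s
    induction s with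
    | nil => rintro (_ | ⟨_ | _, _⟩) <;> simp [binLt]
    | cons a s ih =>
      rintro (_ | ⟨b, t⟩)
      · cases a <;> simp [binLt]
      · cases a <;> cases b <;> simp [binLt] <;> exact ih t

theorem Nat.clog_two_add_one_le {s n : ℕ} (hs : 0 < s) (h : 2 * s ≤ n) :
    Nat.clog 2 s + 1 ≤ Nat.clog 2 n := by
  rw [Nat.clog_of_two_le (n := n) one_lt_two (by omega)]
  exact Nat.add_le_add_right (Nat.clog_mono_right 2 (by omega)) 1

theorem List.eq_of_append_singleton_prefix {α : Type*} {q l : List α} {a b : α}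
    (ha : q ++ [a] <+: l) (hb : q ++ [b] <+: l) : a = b := by
  have := List.prefix_of_prefix_length_le ha hb (by simp)
  simpa using this.eq_of_length (by simp)

section BinaryCode

variable {M : Type*} [LinearOrder M]

theorem Finset.exists_weighted_median (S : Finset M) (hS : S.Nonempty) (w : M → ℕ) :
    ∃ x ∈ S, 2 * ∑ a ∈ S with a < x, w a ≤ ∑ a ∈ S, w a ∧
      2 * ∑ a ∈ S with x < a, w a ≤ ∑ a ∈ S, w a := by
  set n := ∑ a ∈ S, w a
  have hne : {x ∈ S | n ≤ 2 * ∑ a ∈ S with a ≤ x, w a}.Nonempty := by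
    refine ⟨S.max' hS, Finset.mem_filter.2 ⟨S.max'_mem hS, ?_⟩⟩
    rw [Finset.filter_true_of_mem fun a ha => S.le_max' a ha]
    omega
  obtain ⟨x, hxmem, hxmin⟩ : ∃ x ∈ {x ∈ S | n ≤ 2 * ∑ a ∈ S with a ≤ x, w a},
      ∀ y ∈ {x ∈ S | n ≤ 2 * ∑ a ∈ S with a ≤ x, w a}, x ≤ y :=
    ⟨_, Finset.min'_mem _ hne, Finset.min'_le _⟩
  obtain ⟨hxS, hx⟩ := Finset.mem_filter.1 hxmem
  refine ⟨x, hxS, ?_, ?_⟩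
  · by_contra! h
    have hL : {a ∈ S | a < x}.Nonempty := by
      contrapose! h
      simp [h]
    obtain ⟨y, hymem, hymax⟩ : ∃ y ∈ {a ∈ S | a < x}, ∀ a ∈ {a ∈ S | a < x}, a ≤ y :=
      ⟨_, Finset.max'_mem _ hL, Finset.le_max' _⟩
    obtain ⟨hyS, hyx⟩ := Finset.mem_filter.1 hymem
    have hfilt : {a ∈ S | a ≤ y} = {a ∈ S | a < x} := by
      ext a
      simp only [Finset.mem_filter, and_congr_right_iff]
      exact fun ha => ⟨fun hay => hay.trans_lt hyx,
        fun hax => hymax a (Finset.mem_filter.2 ⟨ha, hax⟩)⟩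
    exact (hxmin y (Finset.mem_filter.2 ⟨hyS, by rw [hfilt]; omega⟩)).not_gt hyx
  · have := Finset.sum_filter_add_sum_filter_not S (· ≤ x) w
    simp only [not_le] at this
    omega

theorem exists_binLt_code (S : Finset M) (w : M → ℕ) (hw : ∀ a ∈ S, 0 < w a) :
    ∃ code : M → List Bool, (∀ a ∈ S, ∀ b ∈ S, a < b → binLt (code a) (code b)) ∧
      ∀ a ∈ S, (code a).length + Nat.clog 2 (w a) ≤ Nat.clog 2 (∑ a ∈ S, w a) := by
  induction S using Finset.strongInduction with
  | H S ih =>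
  rcases S.eq_empty_or_nonempty with rfl | hS
  · exact ⟨fun _ => [], by simp, by simp⟩
  obtain ⟨x, hxS, hL, hR⟩ := S.exists_weighted_median hS w
  obtain ⟨codeL, hLmono, hLlen⟩ := ih {a ∈ S | a < x}
    (Finset.filter_ssubset.2 ⟨x, hxS, lt_irrefl x⟩) fun a ha => hw a (Finset.mem_of_mem_filter a ha)
  obtain ⟨codeR, hRmono, hRlen⟩ := ih {a ∈ S | x < a}
    (Finset.filter_ssubset.2 ⟨x, hxS, lt_irrefl x⟩) fun a ha => hw a (Finset.mem_of_mem_filter a ha)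
  refine ⟨fun a => if a < x then false :: codeL a else if x < a then true :: codeR a else [],
    ?_, ?_⟩
  · intro a ha b hb hab
    dsimp only
    split_ifs <;> simp_all [binLt] <;> order
  · have hpos : ∀ T : Finset M, ∀ a ∈ T, a ∈ S → 0 < ∑ a ∈ T, w a := fun T a haT haS =>
      (hw a haS).trans_le (Finset.single_le_sum (fun _ _ => Nat.zero_le _) haT)
    intro a ha
    dsimp only
    split_ifs with hax hxa
    · have haL : a ∈ {a ∈ S | a < x} := Finset.mem_filter.2 ⟨ha, hax⟩
      have := Nat.clog_two_add_one_le (hpos _ a haL ha) hL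
      have := hLlen a haL
      simp only [List.length_cons]
      omega
    · have haR : a ∈ {a ∈ S | x < a} := Finset.mem_filter.2 ⟨ha, hxa⟩
      have := Nat.clog_two_add_one_le (hpos _ a haR ha) hR
      have := hRlen a haR
      simp only [List.length_cons]
      omega
    · simpa using Nat.clog_mono_right 2 (Finset.single_le_sum (fun _ _ => Nat.zero_le _) ha)

end BinaryCode

section PrefixWeight

variable {ι M : Type*} [Fintype ι]

theorem finite_setOf_append_singleton_prefix (μ : ι → List M) (q : List M) :
    {a | ∃ i, q ++ [a] <+: μ i}.Finite := by
  rw [Set.ofPred_exists]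
  exact Set.finite_iUnion fun i => Set.Subsingleton.finite fun _ ha _ hb =>
    List.eq_of_append_singleton_prefix ha hb

noncomputable def nextLetters (μ : ι → List M) (q : List M) : Finset M :=
  (finite_setOf_append_singleton_prefix μ q).toFinset

def prefixWeight [DecidableEq M] (μ : ι → List M) (q : List M) : ℕ :=
  (Finset.univ.filter (q <+: μ ·)).card

variable {μ : ι → List M}

theorem mem_nextLetters {q : List M} {a : M} : a ∈ nextLetters μ q ↔ ∃ i, q ++ [a] <+: μ i :=
  Set.Finite.mem_toFinset _

variable [DecidableEq M]

theorem prefixWeight_nil : prefixWeight μ [] = Fintype.card ι := by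
  simp [prefixWeight]

theorem prefixWeight_pos_of_mem_nextLetters {q : List M} {a : M} (ha : a ∈ nextLetters μ q) :
    0 < prefixWeight μ (q ++ [a]) := by
  obtain ⟨i, hi⟩ := mem_nextLetters.1 ha
  exact Finset.card_pos.2 ⟨i, by simpa using hi⟩

theorem sum_prefixWeight_nextLetters_le (q : List M) :
    ∑ a ∈ nextLetters μ q, prefixWeight μ (q ++ [a]) ≤ prefixWeight μ q := by
  classical
  unfold prefixWeight
  rw [← Finset.card_biUnion]
  · refine Finset.card_le_card fun i hi => ?_
    simp only [Finset.mem_biUnion, Finset.mem_filter, Finset.mem_univ, true_and] at hi ⊢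
    obtain ⟨a, -, ha⟩ := hi
    exact (List.prefix_append q [a]).trans ha
  · intro a _ b _ hab
    refine Finset.disjoint_left.2 fun i hia hib => hab ?_
    simp only [Finset.mem_filter, Finset.mem_univ, true_and] at hia hib
    exact List.eq_of_append_singleton_prefix hia hib

end PrefixWeight

def encodeFrom {M : Type*} (code : List M → M → List Bool) :
    List M → List M → List (List Bool)
  | _, [] => []
  | q, a :: s => code q a :: encodeFrom code (q ++ [a]) s

section Encode

variable {M : Type*} (code : List M → M → List Bool)

@[simp]
theorem length_encodeFrom (q s : List M) : (encodeFrom code q s).length = s.length := by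
  induction s generalizing q <;> simp [encodeFrom, *]

theorem encodeFrom_take (q s : List M) (k : ℕ) :
    encodeFrom code q (s.take k) = (encodeFrom code q s).take k := by
  induction s generalizing q k with
  | nil => simp [encodeFrom]
  | cons a s ih => cases k <;> simp [encodeFrom, ih]

variable {ι : Type*} [Fintype ι] [LinearOrder M] {μ : ι → List M} {code}

theorem lex_encodeFrom
    (hcode : ∀ q, ∀ a ∈ nextLetters μ q, ∀ b ∈ nextLetters μ q, a < b →
      binLt (code q a) (code q b))
    {q s t : List M} (hs : ∃ i, q ++ s <+: μ i) (ht : ∃ j, q ++ t <+: μ j)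
    (hst : List.Lex (· < ·) s t) :
    List.Lex binLt (encodeFrom code q s) (encodeFrom code q t) := by
  induction hst generalizing q with
  | nil => exact List.Lex.nil
  | @cons a s t _ ih =>
    refine List.Lex.cons (ih ?_ ?_) <;> simpa using ‹_›
  | @rel a s b t hab =>
    obtain ⟨i, hi⟩ := hs
    obtain ⟨j, hj⟩ := ht
    refine List.Lex.rel
      (hcode q a (mem_nextLetters.2 ⟨i, ?_⟩) b (mem_nextLetters.2 ⟨j, ?_⟩) hab)
    · exact (List.prefix_append_right_inj q |>.2 (by simp)).trans hi
    · exact (List.prefix_append_right_inj q |>.2 (by simp)).trans hj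

theorem sum_length_encodeFrom_add_clog_le
    (hcode : ∀ q, ∀ a ∈ nextLetters μ q,
      (code q a).length + Nat.clog 2 (prefixWeight μ (q ++ [a])) ≤ Nat.clog 2 (prefixWeight μ q))
    {q s : List M} (hs : ∃ i, q ++ s <+: μ i) :
    ((encodeFrom code q s).map List.length).sum + Nat.clog 2 (prefixWeight μ (q ++ s)) ≤
      Nat.clog 2 (prefixWeight μ q) := by
  induction s generalizing q with
  | nil => simp [encodeFrom]
  | cons a s ih =>
    have ha : a ∈ nextLetters μ q := by
      obtain ⟨i, hi⟩ := hs
      exact mem_nextLetters.2 ⟨i, (List.prefix_append_right_inj q |>.2 (by simp)).trans hi⟩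
    have := ih (q := q ++ [a]) (by simpa using hs)
    have := hcode q a ha
    simp only [encodeFrom, List.map_cons, List.sum_cons, List.append_assoc,
      List.singleton_append] at *
    omega

end Encode

theorem exists_prefix_encoding {ι M : Type*} [Fintype ι] [LinearOrder M] (μ : ι → List M) :
    ∃ f : List M → List (List Bool),
      (∀ s, (f s).length = s.length) ∧
      (∀ s k, f (s.take k) = (f s).take k) ∧
      (∀ i, ((f (μ i)).map List.length).sum ≤ Nat.clog 2 (Fintype.card ι)) ∧
      ∀ s t, (∃ i, s <+: μ i) → (∃ j, t <+: μ j) →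
        List.Lex (· < ·) s t → List.Lex binLt (f s) (f t) := by
  choose code hmono hlen using fun q : List M =>
    exists_binLt_code (nextLetters μ q) (fun a => prefixWeight μ (q ++ [a]))
      fun _ => prefixWeight_pos_of_mem_nextLetters
  have hlen' : ∀ q, ∀ a ∈ nextLetters μ q, (code q a).length +
      Nat.clog 2 (prefixWeight μ (q ++ [a])) ≤ Nat.clog 2 (prefixWeight μ q) := fun q a ha =>
    (hlen q a ha).trans (Nat.clog_mono_right 2 (sum_prefixWeight_nextLetters_le q))
  refine ⟨encodeFrom code [], fun s => length_encodeFrom code [] s,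
    fun s k => encodeFrom_take code [] s k, fun i => ?_, fun s t hs ht =>
      lex_encodeFrom hmono (by simpa using hs) (by simpa using ht)⟩
  have := sum_length_encodeFrom_add_clog_le hlen' (q := []) (s := μ i)
    ⟨i, List.prefix_refl _⟩
  rw [prefixWeight_nil] at this
  omega

theorem rel_iff_and_eq_iff_of_map_rel {α β : Type*} {r : α → α → Prop} {s : β → β → Prop}
    [Std.Trichotomous r] [Std.Asymm r] [Std.Asymm s] {P : α → Prop} {f : α → β}
    (hf : ∀ a b, P a → P b → r a b → s (f a) (f b)) {a b : α} (ha : P a) (hb : P b) :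
    (s (f a) (f b) ↔ r a b) ∧ (f a = f b ↔ a = b) := by
  rcases trichotomous_of r a b with hab | rfl | hba
  · have hfab := hf a b ha hb hab
    exact ⟨iff_of_true hfab hab, iff_of_false (fun h => asymm hfab (h ▸ hfab))
      (fun h => by subst h; exact asymm hab hab)⟩
  · exact ⟨iff_of_false (fun h => asymm h h) (fun h => asymm h h), iff_of_true rfl rfl⟩
  · have hfba := hf b a hb ha hba
    exact ⟨iff_of_false (asymm hfba) (asymm hba),
      iff_of_false (fun h => asymm hfba (h ▸ hfba)) (fun h => by subst h; exact asymm hba hba)⟩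

namespace MPPGame

variable {V M M' : Type} {G : MPPGame V} {W : Set V} {d : ℕ} {μ : V → List M}
  {φ : V → WithTop ℤ}

theorem IsProgressLabellingOn.two_mul_length_le (h : G.IsProgressLabellingOn W d μ φ) {v : V}
    (hv : v ∈ W) : 2 * (μ v).length ≤ d := by
  obtain ⟨l, ⟨c, rfl⟩, -, hl⟩ := (h v hv).1
  omega

theorem IsProgressLabellingOn.trunc_eq_self (h : G.IsProgressLabellingOn W d μ φ) {v : V}
    (hv : v ∈ W) {p : ℕ} (hp : p ≤ G.pri v) : trunc d p (μ v) = μ v := by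
  obtain ⟨l, -, hpl, hl⟩ := (h v hv).1
  exact List.take_of_length_le (by omega)

theorem IsProgressLabellingOn.of_length_eq (h : G.IsProgressLabellingOn W d μ φ)
    {μ' : V → List M'} (hlen : ∀ v ∈ W, (μ' v).length = (μ v).length) :
    G.IsProgressLabellingOn W d μ' φ := fun v hv => by
  rw [hlen v hv]
  exact h v hv

variable {lt : M → M → Prop} {lt' : M' → M' → Prop} {μ' : V → List M'}

theorem Progressive.of_trunc_iff (hlab : G.IsProgressLabellingOn W d μ φ)
    (hlen : ∀ v ∈ W, (μ' v).length = (μ v).length)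
    (hlt : ∀ v w p, seqLt lt' (trunc d p (μ' v)) (trunc d p (μ' w)) ↔
      seqLt lt (trunc d p (μ v)) (trunc d p (μ w)))
    (heq : ∀ v w p, trunc d p (μ' v) = trunc d p (μ' w) ↔ trunc d p (μ v) = trunc d p (μ w))
    {v u : V} (hv : v ∈ W) (hu : u ∈ W) (h : G.Progressive d lt μ φ v u) :
    G.Progressive d lt' μ' φ v u := by
  have hlab' := hlab.of_length_eq hlen
  have htrunc := hlab.trunc_eq_self hv le_rfl
  have htrunc' := hlab'.trunc_eq_self hv le_rfl
  rcases h with h | ⟨h, hev, htop⟩ | ⟨h, hfin, hcost⟩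
  · left
    rwa [← htrunc', hlt, htrunc]
  · exact Or.inr (Or.inl ⟨by rwa [← htrunc', heq, htrunc], hev, htop⟩)
  · refine Or.inr (Or.inr ⟨?_, hfin, hcost⟩)
    simpa only [hlab.trunc_eq_self hu (Nat.zero_le _), hlab.trunc_eq_self hv (Nat.zero_le _),
      hlab'.trunc_eq_self hu (Nat.zero_le _), hlab'.trunc_eq_self hv (Nat.zero_le _)]
      using (heq u v 0).2 (congrArg _ h)

theorem IsProgressMeasureOn.of_trunc_iff (hmeas : G.IsProgressMeasureOn W d lt μ φ)
    (hlen : ∀ v ∈ W, (μ' v).length = (μ v).length)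
    (hlt : ∀ v w p, seqLt lt' (trunc d p (μ' v)) (trunc d p (μ' w)) ↔
      seqLt lt (trunc d p (μ v)) (trunc d p (μ w)))
    (heq : ∀ v w p, trunc d p (μ' v) = trunc d p (μ' w) ↔ trunc d p (μ v) = trunc d p (μ w)) :
    G.IsProgressMeasureOn W d lt' μ' φ := by
  obtain ⟨hlab, hdis, hcon⟩ := hmeas
  refine ⟨hlab.of_length_eq hlen, fun v hv hown => ?_, fun v hv hown u hu he =>
    (hcon v hv hown u hu he).of_trunc_iff hlab hlen hlt heq hv hu⟩
  obtain ⟨u, hu, he, hprog⟩ := hdis v hv hown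
  exact ⟨u, hu, he, hprog.of_trunc_iff hlab hlen hlt heq hv hu⟩

end MPPGame

theorem exists_succinct_isomorphic_progress_labelling_general
    {V M : Type} [Fintype V] (G : MPPGame V)
    (d : ℕ) (lt : M → M → Prop) (hlt : IsStrictTotalOrder M lt)
    (μ : V → List M) (φ : V → WithTop ℤ)
    (hlab : G.IsProgressLabellingOn Set.univ d μ φ) :
    ∃ μ' : V → List (List Bool),
      G.IsProgressLabellingOn Set.univ d μ' φ ∧
      (∀ v, inSnd (Fintype.card V) d (μ' v)) ∧
      (∀ v, (μ' v).length = (μ v).length) ∧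
      (∀ v w p, seqLt binLt (trunc d p (μ' v)) (trunc d p (μ' w)) ↔
        seqLt lt (trunc d p (μ v)) (trunc d p (μ w))) ∧
      (∀ v w p, trunc d p (μ' v) = trunc d p (μ' w) ↔
        trunc d p (μ v) = trunc d p (μ w)) ∧
      (G.IsProgressMeasureOn Set.univ d lt μ φ →
        G.IsProgressMeasureOn Set.univ d binLt μ' φ) := by
  classical
  let := @linearOrderOfSTO M lt hlt _
  obtain ⟨f, hlen, htake, hsize, hmono⟩ := exists_prefix_encoding μ
  have hiso : ∀ v w p,
      (seqLt binLt (trunc d p (f (μ v))) (trunc d p (f (μ w))) ↔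
        seqLt lt (trunc d p (μ v)) (trunc d p (μ w))) ∧
      (trunc d p (f (μ v)) = trunc d p (f (μ w)) ↔ trunc d p (μ v) = trunc d p (μ w)) := by
    intro v w p
    simp only [trunc, ← htake]
    exact rel_iff_and_eq_iff_of_map_rel hmono ⟨v, List.take_prefix _ _⟩
      ⟨w, List.take_prefix _ _⟩
  have hlen' : ∀ v ∈ Set.univ, (f (μ v)).length = (μ v).length := fun v _ => hlen _
  refine ⟨fun v => f (μ v), hlab.of_length_eq hlen', fun v => ⟨?_, hsize v⟩, fun v => hlen _,
    fun v w p => (hiso v w p).1, fun v w p => (hiso v w p).2,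
    fun h => h.of_trunc_iff hlen' (fun v w p => (hiso v w p).1) fun v w p => (hiso v w p).2⟩
  rw [hlen]
  exact hlab.two_mul_length_le (Set.mem_univ v)

/-- Every progress labelling (over any linearly ordered set
`M`) has an isomorphic succinct progress labelling: same `φ`, values of `μ'`
in `S_{n,d}`, same index `ℓ` at every vertex, and the same order and equality
relations between all `p`-truncations; in particular if `(μ, φ)` is a progress
measure then so is `(μ', φ)`. -/
theorem exists_succinct_isomorphic_progress_labelling
    {V M : Type} [Fintype V] (G : MPPGame V)
    (d : ℕ) (hd : Even d) (hpri : ∀ v, G.pri v ≤ d)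
    (lt : M → M → Prop) (hlt : IsStrictTotalOrder M lt)
    (μ : V → List M) (φ : V → WithTop ℤ)
    (hlab : G.IsProgressLabellingOn Set.univ d μ φ) :
    ∃ μ' : V → List (List Bool),
      G.IsProgressLabellingOn Set.univ d μ' φ ∧
      (∀ v, inSnd (Fintype.card V) d (μ' v)) ∧
      (∀ v, (μ' v).length = (μ v).length) ∧
      (∀ v w p, seqLt binLt (trunc d p (μ' v)) (trunc d p (μ' w)) ↔
        seqLt lt (trunc d p (μ v)) (trunc d p (μ w))) ∧
      (∀ v w p, trunc d p (μ' v) = trunc d p (μ' w) ↔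
        trunc d p (μ v) = trunc d p (μ w)) ∧
      (G.IsProgressMeasureOn Set.univ d lt μ φ →
        G.IsProgressMeasureOn Set.univ d binLt μ' φ) :=
  exists_succinct_isomorphic_progress_labelling_general G d lt hlt μ φ hlab
end

section
/- Let L be a finite complete lattice and let (F_i)_{i ∈ I} be a family of operators F_i : L → L, each inflationary (x ≤ F_i(x) for all x) and monotone (x ≤ y implies F_i(x) ≤ F_i(y)). Then for every x ∈ L there exists a least element z ≥ x that is a simultaneous fixed point of all the operators (F_i(z) = z for all i ∈ I); moreover, every maximal sequence x = x₀, x₁, x₂, … in which each x_{k+1} = F_{i_k}(x_k) ≠ x_k for some i_k ∈ I is finite and its last element equals z. -/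
/-- For a family of inflationary monotone operators on a
finite complete lattice and any starting point `x`, there is a least
simultaneous fixed point `z ≥ x`; there is no infinite sequence of strict
liftings from `x`, and every maximal sequence of strict liftings from `x`
ends in `z`. -/
theorem lifting_reaches_least_simultaneous_fixed_point
    {L : Type} {I : Type} [CompleteLattice L] [Fintype L]
    (F : I → L → L)
    (hinfl : ∀ i x, x ≤ F i x)
    (hmono : ∀ i, ∀ x y : L, x ≤ y → F i x ≤ F i y)
    (x : L) :
    ∃ z : L, x ≤ z ∧ (∀ i, F i z = z) ∧
      (∀ w, x ≤ w → (∀ i, F i w = w) → z ≤ w) ∧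
      (¬ ∃ s : ℕ → L, s 0 = x ∧
        ∀ j, ∃ i, s (j + 1) = F i (s j) ∧ s (j + 1) ≠ s j) ∧
      (∀ (k : ℕ) (s : ℕ → L), s 0 = x →
        (∀ j < k, ∃ i, s (j + 1) = F i (s j) ∧ s (j + 1) ≠ s j) →
        (∀ i, F i (s k) = s k) → s k = z) := by
  classical
  set S : Set L := {w | x ≤ w ∧ ∀ i, F i w = w} with hS
  set z : L := sInf S with hz
  have hxz : x ≤ z := le_sInf fun w hw => hw.1
  have hfz : ∀ i, F i z = z := by
    intro i
    refine le_antisymm (le_sInf fun w hw => ?_) (hinfl i z)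
    calc F i z ≤ F i w := hmono i _ _ (sInf_le hw)
    _ = w := hw.2 i
  have hleast : ∀ w, x ≤ w → (∀ i, F i w = w) → z ≤ w :=
    fun w h1 h2 => sInf_le ⟨h1, h2⟩
  refine ⟨z, hxz, hfz, hleast, ?_, ?_⟩
  · rintro ⟨s, hs0, hs⟩
    have hsm : StrictMono s := strictMono_nat_of_lt_succ fun j => by
      obtain ⟨i, h1, h2⟩ := hs j
      exact lt_of_le_of_ne (h1 ▸ hinfl i (s j)) (Ne.symm h2)
    exact Finite.false (Finite.of_injective s hsm.injective)
  · intro k s hs0 hstep hfix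
    have hmonos : ∀ j ≤ k, s j ≤ z := by
      intro j hj
      induction j with
      | zero => exact hs0 ▸ hxz
      | succ n ih =>
        obtain ⟨i, h1, _⟩ := hstep n (Nat.lt_of_succ_le hj)
        calc s (n + 1) = F i (s n) := h1
        _ ≤ F i z := hmono i _ _ (ih (Nat.le_of_succ_le hj))
        _ = z := hfz i
    have hxk : x ≤ s k := by
      have : ∀ j ≤ k, x ≤ s j := by
        intro j hj
        induction j with
        | zero => exact hs0 ▸ le_refl x
        | succ n ih =>
          obtain ⟨i, h1, _⟩ := hstep n (Nat.lt_of_succ_le hj)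
          exact le_trans (ih (Nat.le_of_succ_le hj)) (h1 ▸ hinfl i (s n))
      exact this k le_rfl
    exact le_antisymm (hmonos k le_rfl) (hleast (s k) hxk hfix)
end

section
/- Let B be a nonnegative integer and let c : ℕ → ℤ and e : ℕ → ℤ be sequences such that for all k: 0 ≤ e(k) ≤ B and e(k) + c(k) ≥ e(k+1). Then limsup_{N→∞} (1/N)·∑_{k<N} c(k) ≥ 0. -/
theorem sub_le_sum_range_of_le_add {α : Type*} [AddCommGroup α] [PartialOrder α]
    [IsOrderedAddMonoid α] {c e : ℕ → α} (h : ∀ k, e (k + 1) ≤ e k + c k) (N : ℕ) :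
    e N - e 0 ≤ ∑ k ∈ Finset.range N, c k :=
  (Finset.sum_range_sub e N).symm.le.trans
    (Finset.sum_le_sum fun k _ => sub_le_iff_le_add'.mpr (h k))

theorem zero_le_limsup_div_natCast_of_bddBelow {s : ℕ → ℝ} (hs : BddBelow (Set.range s)) :
    (0 : EReal) ≤ Filter.limsup (fun N => ((s N / N : ℝ) : EReal)) Filter.atTop := by
  obtain ⟨a, ha⟩ := hs
  have hlim : Filter.Tendsto (fun N : ℕ => ((a / N : ℝ) : EReal)) Filter.atTop (nhds 0) :=
    EReal.tendsto_coe.mpr (tendsto_const_div_atTop_nhds_zero_nat a)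
  calc (0 : EReal) = Filter.limsup (fun N : ℕ => ((a / N : ℝ) : EReal)) Filter.atTop :=
        hlim.limsup_eq.symm
    _ ≤ _ := Filter.limsup_le_limsup <| Filter.Eventually.of_forall fun N =>
        EReal.coe_le_coe_iff.mpr <| div_le_div_of_nonneg_right (ha ⟨N, rfl⟩) N.cast_nonneg

theorem bounded_energy_nonneg_mean_payoff_general
    (B : ℤ) (c e : ℕ → ℤ)
    (he0 : ∀ k, 0 ≤ e k) (heB : ∀ k, e k ≤ B)
    (hstep : ∀ k, e (k + 1) ≤ e k + c k) :
    (0 : EReal) ≤ Filter.limsup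
      (fun N => (((∑ k ∈ Finset.range N, (c k : ℝ)) / (N : ℝ) : ℝ) : EReal))
      Filter.atTop := by
  refine zero_le_limsup_div_natCast_of_bddBelow ⟨-B, Set.forall_mem_range.mpr fun N => ?_⟩
  have hsum : -B ≤ ∑ k ∈ Finset.range N, c k := by
    linarith [sub_le_sum_range_of_le_add hstep N, he0 N, heB 0]
  exact_mod_cast hsum

/-- If a nonnegative, bounded "energy" sequence `e`
satisfies `e k + c k ≥ e (k+1)` at every step, then the mean payoff
(the limit superior, in the extended reals, of the averages of the partial
sums of `c`) is nonnegative. -/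
theorem bounded_energy_nonneg_mean_payoff
    (B : ℤ) (hB : 0 ≤ B) (c e : ℕ → ℤ)
    (he0 : ∀ k, 0 ≤ e k) (heB : ∀ k, e k ≤ B)
    (hstep : ∀ k, e (k + 1) ≤ e k + c k) :
    (0 : EReal) ≤ Filter.limsup
      (fun N => (((∑ k ∈ Finset.range N, (c k : ℝ)) / (N : ℝ) : ℝ) : EReal))
      Filter.atTop :=
  bounded_energy_nonneg_mean_payoff_general B c e he0 heB hstep
end
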